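/- arXiv:0812.2499 — 9 statements merged into one kernel-verified Lean document; each statement's English description precedes it below -/
import Mathlib

section
/- Let G be a group with a left-invariant strict total order < with positive cone P = {g ∈ G : 1 < g}. Then the set stab(P) = {g ∈ G : gPg⁻¹ = P} is a subgroup of G, and the restriction of < to stab(P) is invariant under both left and right multiplication (i.e., it is a bi-ordering of stab(P)). -/
/-- for a left-invariant strict total order `lt` on `G` with positive cone
`P = {g | lt 1 g}`, the set `stab(P) = {g | gPg⁻¹ = P}` is a subgroup, and the
restriction of `lt` to `stab(P)` is invariant under both left and right multiplication. -/
theorem statement1 {G : Type*} [Group G] (lt : G → G → Prop)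
    (hsto : IsStrictTotalOrder G lt)
    (hleft : ∀ f g h : G, lt g h → lt (f * g) (f * h))
    (P : Set G) (hP : P = {g : G | lt 1 g}) :
    let S : Set G := {g : G | (fun p => g * p * g⁻¹) '' P = P}
    (1 : G) ∈ S ∧ (∀ g ∈ S, g⁻¹ ∈ S) ∧ (∀ g ∈ S, ∀ h ∈ S, g * h ∈ S) ∧
      (∀ f g h : G, f ∈ S → g ∈ S → h ∈ S → lt g h → lt (f * g) (f * h)) ∧
      (∀ f g h : G, f ∈ S → g ∈ S → h ∈ S → lt g h → lt (g * f) (h * f)) := by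
  intro S
  -- pointwise characterization of membership in S
  have key : ∀ g : G, g ∈ S ↔ ∀ x : G, x ∈ P ↔ g⁻¹ * x * g ∈ P := by
    intro g
    constructor
    · intro hg x
      constructor
      · intro hx
        have : g * (g⁻¹ * x * g) * g⁻¹ = x := by group
        have hx' : x ∈ (fun p => g * p * g⁻¹) '' P := by rw [hg]; exact hx
        rcases hx' with ⟨p, hp, hpx⟩
        have : g⁻¹ * x * g = p := by
          rw [← hpx]; group
        rwa [this]
      · intro hx
        have : x ∈ (fun p => g * p * g⁻¹) '' P := ⟨g⁻¹ * x * g, hx, by group⟩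
        rwa [hg] at this
    · intro h
      ext y
      constructor
      · rintro ⟨p, hp, rfl⟩
        show g * p * g⁻¹ ∈ P
        rw [h, show g⁻¹ * (g * p * g⁻¹) * g = p by group]
        exact hp
      · intro hy
        exact ⟨g⁻¹ * y * g, (h y).mp hy, by group⟩
  -- lt in terms of P
  have hlt : ∀ a b : G, lt a b ↔ a⁻¹ * b ∈ P := by
    intro a b
    rw [hP]
    constructor
    · intro h
      have := hleft a⁻¹ a b h
      simpa using this
    · intro h
      have := hleft a 1 (a⁻¹ * b) h
      simp only [mul_one] at this
      rw [show a * (a⁻¹ * b) = b by group] at this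
      exact this
  refine ⟨?_, ?_, ?_, ?_, ?_⟩
  · show (fun p => 1 * p * 1⁻¹) '' P = P
    simp
  · intro g hg
    rw [key] at hg ⊢
    intro x
    have := hg (g * x * g⁻¹)
    simp only [show g⁻¹ * (g * x * g⁻¹) * g = x by group] at this
    rw [show (g⁻¹)⁻¹ * x * g⁻¹ = g * x * g⁻¹ by group]
    exact this.symm
  · intro g hg h hh
    rw [key] at hg hh ⊢
    intro x
    rw [show (g * h)⁻¹ * x * (g * h) = h⁻¹ * (g⁻¹ * x * g) * h by group]
    exact (hg x).trans (hh (g⁻¹ * x * g))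
  · intro f g h _ _ _ hgh
    exact hleft f g h hgh
  · intro f g h hf _ _ hgh
    rw [hlt] at hgh ⊢
    rw [key] at hf
    have := (hf (g⁻¹ * h)).mp hgh
    rwa [show f⁻¹ * (g⁻¹ * h) * f = (g * f)⁻¹ * (h * f) by group] at this
end

section
/- Let G be a group with left ordering < and let C be a convex subgroup (with respect to <). Suppose P' is a positive cone on G defined by: g ∈ P' iff (g ∈ C and g ∈ Q) or (g ∉ C and g ∈ P), where Q is any positive cone of a left ordering of C and P is the positive cone of <. Then P' is the positive cone of a left ordering of G. -/
/-- A positive cone of a left ordering of `G`: a subsemigroup such that for every `g`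
exactly one of `g ∈ P`, `g⁻¹ ∈ P`, `g = 1` holds. -/
def IsPosCone {G : Type*} [Group G] (P : Set G) : Prop :=
  (∀ a ∈ P, ∀ b ∈ P, a * b ∈ P) ∧
  (∀ g : G, g ∈ P ∨ g⁻¹ ∈ P ∨ g = 1) ∧
  (∀ g : G, g ∈ P → g⁻¹ ∉ P) ∧
  (1 : G) ∉ P

/-- replacing the restriction of a positive cone `P` to a convex subgroup `C`
by any positive cone `Q` of a left ordering of `C` again yields a positive cone of a left
ordering of `G`. -/
theorem statement5 {G : Type*} [Group G] (P : Set G) (hP : IsPosCone P)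
    (C : Subgroup G)
    (hconv : ∀ f g h : G, f ∈ C → h ∈ C → f⁻¹ * g ∈ P → g⁻¹ * h ∈ P → g ∈ C)
    (Q : Set G) (hQC : Q ⊆ (C : Set G))
    (hQmul : ∀ a ∈ Q, ∀ b ∈ Q, a * b ∈ Q)
    (hQtri : ∀ g : G, g ∈ C → g ∈ Q ∨ g⁻¹ ∈ Q ∨ g = 1)
    (hQasym : ∀ g : G, g ∈ Q → g⁻¹ ∉ Q) :
    IsPosCone (Q ∪ (P \ (C : Set G))) := by
  obtain ⟨hPmul, hPtri, hPasym, hP1⟩ := hP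
  -- key lemma: a ∈ C, b ∈ P \ C ⇒ a*b ∈ P
  have key₁ : ∀ a b : G, a ∈ C → b ∈ P → b ∉ (C : Set G) → a * b ∈ P := by
    intro a b haC hbP hbC
    rcases hPtri (a * b) with h | h | h
    · exact h
    · exfalso
      apply hbC
      refine hconv 1 b a⁻¹ C.one_mem (C.inv_mem haC) (by simpa using hbP) ?_
      simpa [mul_assoc] using h
    · exact absurd (eq_inv_of_mul_eq_one_right h) (fun hb => hbC (hb ▸ C.inv_mem haC))
  have key₂ : ∀ a b : G, a ∈ P → a ∉ (C : Set G) → b ∈ C → a * b ∈ P := by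
    intro a b haP haC hbC
    rcases hPtri (a * b) with h | h | h
    · exact h
    · exfalso
      apply haC
      have hinv : a⁻¹ ∈ C := by
        refine hconv b a⁻¹ 1 hbC C.one_mem ?_ (by simpa using haP)
        simpa [mul_assoc] using h
      simpa using C.inv_mem hinv
    · exact absurd (eq_inv_of_mul_eq_one_left h)
        (fun ha => haC (ha ▸ C.inv_mem hbC))
  refine ⟨?_, ?_, ?_, ?_⟩
  · rintro a (haQ | ⟨haP, haC⟩) b (hbQ | ⟨hbP, hbC⟩)
    · exact Or.inl (hQmul a haQ b hbQ)
    · refine Or.inr ⟨key₁ a b (hQC haQ) hbP hbC, fun hab => hbC ?_⟩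
      have : a⁻¹ * (a * b) ∈ C := C.mul_mem (C.inv_mem (hQC haQ)) hab
      simpa using this
    · refine Or.inr ⟨key₂ a b haP haC (hQC hbQ), fun hab => haC ?_⟩
      have : (a * b) * b⁻¹ ∈ C := C.mul_mem hab (C.inv_mem (hQC hbQ))
      simpa [mul_assoc] using this
    · refine Or.inr ⟨hPmul a haP b hbP, fun hab => haC ?_⟩
      exact hconv 1 a (a * b) C.one_mem hab (by simpa using haP) (by simpa using hbP)
  · intro g
    by_cases hgC : g ∈ C
    · rcases hQtri g hgC with h | h | h
      · exact Or.inl (Or.inl h)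
      · exact Or.inr (Or.inl (Or.inl h))
      · exact Or.inr (Or.inr h)
    · rcases hPtri g with h | h | h
      · exact Or.inl (Or.inr ⟨h, hgC⟩)
      · exact Or.inr (Or.inl (Or.inr ⟨h, fun hc => hgC (by simpa using C.inv_mem hc)⟩))
      · exact Or.inr (Or.inr h)
  · rintro g (hgQ | ⟨hgP, hgC⟩) (hQ' | ⟨hP', hC'⟩)
    · exact hQasym g hgQ hQ'
    · exact hC' (C.inv_mem (hQC hgQ))
    · exact hgC (by simpa using C.inv_mem (hQC hQ'))
    · exact hPasym g hgP hP'
  · rintro (h1 | ⟨h1, _⟩)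
    · exact hQasym 1 h1 (by simpa using h1)
    · exact hP1 h1
end

section
/- Let G be a group, C a left-orderable subgroup with left ordering ≺, and suppose ≺' is a strict total ordering of the left cosets of C in G satisfying aC ≺' bC ⟹ caC ≺' cbC for all a, b, c ∈ G. Then the set P = {g ∈ C : 1 ≺ g} ∪ {g ∉ C : C ≺' gC} is the positive cone of a left ordering of G. -/
section RaisingSet

variable (G : Type*) {X : Type*} [Group G] [MulAction G X] (r : X → X → Prop) (x : X)

def raisingSet : Set G := {g | r x (g • x)}

variable {G r x}

theorem mem_raisingSet {g : G} : g ∈ raisingSet G r x ↔ r x (g • x) := Iff.rfl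

theorem mul_mem_raisingSet_of_smul_eq_right {a c : G} (hc : c • x = x)
    (ha : a ∈ raisingSet G r x) : a * c ∈ raisingSet G r x := by
  rwa [mem_raisingSet, mul_smul, hc]

theorem smul_ne_of_mem_raisingSet [Std.Irrefl r] {a : G} (ha : a ∈ raisingSet G r x) :
    a • x ≠ x := by
  intro h
  rw [mem_raisingSet, h] at ha
  exact irrefl x ha

variable (hr : ∀ (g : G) (y z : X), r y z → r (g • y) (g • z))
include hr

theorem mul_mem_raisingSet_of_smul_eq_left {a c : G} (hc : c • x = x)
    (ha : a ∈ raisingSet G r x) : c * a ∈ raisingSet G r x := by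
  have h := hr c _ _ ha
  rwa [hc, ← mul_smul] at h

variable [IsStrictTotalOrder X r]

theorem mul_mem_raisingSet {a b : G} (ha : a ∈ raisingSet G r x) (hb : b ∈ raisingSet G r x) :
    a * b ∈ raisingSet G r x := by
  have hab : r (a • x) ((a * b) • x) := mul_smul a b x ▸ hr a _ _ hb
  exact _root_.trans ha hab

theorem inv_notMem_raisingSet {a : G} (ha : a ∈ raisingSet G r x) :
    a⁻¹ ∉ raisingSet G r x := by
  intro ha'
  have hlt : r (a • x) x := by simpa using hr a _ _ ha'
  exact irrefl x (_root_.trans ha hlt)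

theorem mem_or_inv_mem_raisingSet {a : G} (ha : a • x ≠ x) :
    a ∈ raisingSet G r x ∨ a⁻¹ ∈ raisingSet G r x := by
  rcases trichotomous_of r x (a • x) with hlt | heq | hgt
  · exact Or.inl hlt
  · exact absurd heq.symm ha
  · exact Or.inr (mem_raisingSet.2 (by simpa using hr a⁻¹ _ _ hgt))

theorem isPosCone_union_raisingSet {C : Subgroup G} (hC : MulAction.stabilizer G x = C)
    {P : Set C} (hP : IsPosCone P) :
    IsPosCone ({g : G | ∃ h : g ∈ C, (⟨g, h⟩ : C) ∈ P} ∪ raisingSet G r x) := by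
  obtain ⟨hPmul, hPtot, hPasymm, hPone⟩ := hP
  have hmemC : ∀ {g : G}, g ∈ C ↔ g • x = x := by
    intro g
    rw [← hC, MulAction.mem_stabilizer_iff]
  refine ⟨?_, fun g => ?_, ?_, ?_⟩
  · rintro a (⟨ha, hPa⟩ | ha) b (⟨hb, hPb⟩ | hb)
    · exact Or.inl ⟨C.mul_mem ha hb, hPmul _ hPa _ hPb⟩
    · exact Or.inr (mul_mem_raisingSet_of_smul_eq_left hr (hmemC.1 ha) hb)
    · exact Or.inr (mul_mem_raisingSet_of_smul_eq_right (hmemC.1 hb) ha)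
    · exact Or.inr (mul_mem_raisingSet hr ha hb)
  · by_cases hg : g ∈ C
    · rcases hPtot ⟨g, hg⟩ with h | h | h
      · exact Or.inl (Or.inl ⟨hg, h⟩)
      · exact Or.inr (Or.inl (Or.inl ⟨C.inv_mem hg, h⟩))
      · exact Or.inr (Or.inr (congrArg Subtype.val h))
    · rcases mem_or_inv_mem_raisingSet hr (mt hmemC.2 hg) with h | h
      · exact Or.inl (Or.inr h)
      · exact Or.inr (Or.inl (Or.inr h))
  · rintro g (⟨hg, hPg⟩ | hg) (⟨hg', hPg'⟩ | hg')
    · exact hPasymm _ hPg hPg'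
    · exact smul_ne_of_mem_raisingSet hg' (hmemC.1 (C.inv_mem hg))
    · exact smul_ne_of_mem_raisingSet hg (hmemC.1 (by simpa using C.inv_mem hg'))
    · exact inv_notMem_raisingSet hr hg hg'
  · rintro (⟨_, h1⟩ | h1)
    · exact hPone h1
    · exact smul_ne_of_mem_raisingSet h1 (one_smul G x)

end RaisingSet

theorem isPosCone_setOf_one_lt {H : Type*} [Group H] {r : H → H → Prop}
    [IsStrictTotalOrder H r] (hr : ∀ f g h : H, r g h → r (f * g) (f * h)) :
    IsPosCone {h | r 1 h} := by
  have hS : {h : H | r 1 h} = raisingSet H r 1 := by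
    ext h
    simp [mem_raisingSet]
  rw [hS]
  refine ⟨fun a ha b hb => mul_mem_raisingSet hr ha hb, fun g => ?_,
    fun g hg => inv_notMem_raisingSet hr hg, fun h1 => smul_ne_of_mem_raisingSet h1 (one_smul H 1)⟩
  by_cases hg : g = 1
  · exact Or.inr (Or.inr hg)
  · rcases mem_or_inv_mem_raisingSet hr (by simpa using hg) with h | h
    · exact Or.inl h
    · exact Or.inr (Or.inl h)

/-- given a subgroup `C` with a left-invariant strict total order `ltC`, and a
left-invariant strict total order `lt'` on the left cosets `G ⧸ C`, the set of elements of
`C` positive for `ltC` together with elements `g ∉ C` with `C ≺' gC` is the positive cone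
of a left ordering of `G`. -/
theorem statement6 {G : Type*} [Group G] (C : Subgroup G)
    (ltC : C → C → Prop) (hCsto : IsStrictTotalOrder C ltC)
    (hCleft : ∀ f g h : C, ltC g h → ltC (f * g) (f * h))
    (lt' : G ⧸ C → G ⧸ C → Prop) (hsto' : IsStrictTotalOrder (G ⧸ C) lt')
    (hleft' : ∀ a b c : G, lt' (a : G ⧸ C) (b : G ⧸ C) →
      lt' ((c * a : G) : G ⧸ C) ((c * b : G) : G ⧸ C)) :
    IsPosCone ({g : G | ∃ h : g ∈ C, ltC 1 ⟨g, h⟩} ∪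
      {g : G | g ∉ C ∧ lt' ((1 : G) : G ⧸ C) (g : G ⧸ C)}) := by
  have hr : ∀ (g : G) (y z : G ⧸ C), lt' y z → lt' (g • y) (g • z) := by
    intro g y z
    induction y using QuotientGroup.induction_on
    induction z using QuotientGroup.induction_on
    exact hleft' _ _ g
  have hQ : {g : G | g ∉ C ∧ lt' ((1 : G) : G ⧸ C) (g : G ⧸ C)} =
      raisingSet G lt' ((1 : G) : G ⧸ C) := by
    ext g
    have hiff : g ∈ raisingSet G lt' ((1 : G) : G ⧸ C) ↔ lt' ((1 : G) : G ⧸ C) (g : G ⧸ C) := by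
      simp [mem_raisingSet]
    refine ⟨fun h => hiff.2 h.2, fun h => ⟨fun hg => smul_ne_of_mem_raisingSet h ?_, hiff.1 h⟩⟩
    rwa [← MulAction.mem_stabilizer_iff, MulAction.stabilizer_quotient]
  rw [hQ]
  exact isPosCone_union_raisingSet hr (MulAction.stabilizer_quotient C)
    (isPosCone_setOf_one_lt hCleft)
end

section
/- Let A be a torsion-free abelian group and N ≤ A a subgroup with a left ordering whose positive cone is P_N such that the ordering is dense (no least positive element). Define the isolator I(N) = {g ∈ A : gˡ ∈ N for some positive integer l} and Q = {g ∈ I(N) : gˡ ∈ P_N for some positive integer l}. Then Q is the positive cone of a dense left ordering of I(N). -/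
/-! Write `a < b` for `a⁻¹ * b ∈ P_N`.  Each cone axiom of `Q` follows from the one of `P_N`
after raising to a common power, using `(a * b) ^ (l * m) = (a ^ l) ^ m * (b ^ m) ^ l`;
torsion-freeness turns `g ^ l = 1` into `g = 1`.  Density of `Q` reduces to finding, for
`p ∈ P_N` and any `l`, some `g ∈ P_N` with `g ^ l < p`.  Density of `P_N` gives `d < p`, and
shrinking the smaller of `d` and `d⁻¹ * p` gives `g` with `g ^ 2 < p`; iterating gives
`g ^ (2 ^ k) < p`, and `l < 2 ^ l`. -/

section PositiveCone

variable {A : Type*} [CommGroup A] {P : Set A}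

theorem pow_mem_of_mul_mem (hmul : ∀ a ∈ P, ∀ b ∈ P, a * b ∈ P) {a : A} (ha : a ∈ P)
    {n : ℕ} (hn : 0 < n) : a ^ n ∈ P := by
  induction n, Nat.one_le_iff_ne_zero.mpr hn.ne' using Nat.le_induction with
  | base => simpa using ha
  | succ n hn ih => simpa [pow_succ] using hmul _ (ih (by omega)) _ ha

theorem exists_sq_lt_of_dense (N : Subgroup A) (hPN : P ⊆ N)
    (hmul : ∀ a ∈ P, ∀ b ∈ P, a * b ∈ P)
    (htri : ∀ g : A, g ∈ N → g ∈ P ∨ g⁻¹ ∈ P ∨ g = 1)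
    (hdense : ∀ ε ∈ P, ∃ g ∈ P, g⁻¹ * ε ∈ P) {p : A} (hp : p ∈ P) :
    ∃ g ∈ P, (g ^ 2)⁻¹ * p ∈ P := by
  obtain ⟨d, hd, hdp⟩ := hdense p hp
  have hsq_le : ∃ m ∈ P, (m ^ 2)⁻¹ * p ∈ P ∨ m ^ 2 = p := by
    rcases htri (d⁻¹ * (d⁻¹ * p)) (N.mul_mem (N.inv_mem (hPN hd)) (hPN hdp)) with h | h | h
    · exact ⟨d, hd, .inl (by convert h using 1; group)⟩
    · exact ⟨d⁻¹ * p, hdp, .inl (by convert h using 1; rw [mul_pow, mul_comm]; group)⟩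
    · exact ⟨d, hd, .inr (by rw [← mul_one (d ^ 2), ← h]; group)⟩
  obtain ⟨m, hm, hmp⟩ := hsq_le
  obtain ⟨e, he, hem⟩ := hdense m hm
  have hem2 : (e⁻¹ * m) ^ 2 ∈ P := pow_mem_of_mul_mem hmul hem two_pos
  refine ⟨e, he, ?_⟩
  have hsplit : (e ^ 2)⁻¹ * p = (e⁻¹ * m) ^ 2 * ((m ^ 2)⁻¹ * p) := by rw [mul_pow]; group
  rcases hmp with hmp | hmp
  · exact hsplit ▸ hmul _ hem2 _ hmp
  · simpa [hsplit, hmp] using hem2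

theorem exists_pow_two_pow_lt_of_dense (N : Subgroup A) (hPN : P ⊆ N)
    (hmul : ∀ a ∈ P, ∀ b ∈ P, a * b ∈ P)
    (htri : ∀ g : A, g ∈ N → g ∈ P ∨ g⁻¹ ∈ P ∨ g = 1)
    (hdense : ∀ ε ∈ P, ∃ g ∈ P, g⁻¹ * ε ∈ P) (k : ℕ) {p : A} (hp : p ∈ P) :
    ∃ g ∈ P, (g ^ 2 ^ k)⁻¹ * p ∈ P := by
  induction k generalizing p with
  | zero => simpa using hdense p hp
  | succ k ih =>
    obtain ⟨g, hg, hgp⟩ := ih hp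
    obtain ⟨h, hh, hhg⟩ := exists_sq_lt_of_dense N hPN hmul htri hdense hg
    refine ⟨h, hh, ?_⟩
    have hsplit : (h ^ 2 ^ (k + 1))⁻¹ * p = ((h ^ 2)⁻¹ * g) ^ 2 ^ k * ((g ^ 2 ^ k)⁻¹ * p) := by
      rw [mul_pow, inv_pow, ← pow_mul, ← pow_succ']
      group
    exact hsplit ▸ hmul _ (pow_mem_of_mul_mem hmul hhg (by positivity)) _ hgp

theorem exists_pow_lt_of_dense (N : Subgroup A) (hPN : P ⊆ N)
    (hmul : ∀ a ∈ P, ∀ b ∈ P, a * b ∈ P)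
    (htri : ∀ g : A, g ∈ N → g ∈ P ∨ g⁻¹ ∈ P ∨ g = 1)
    (hdense : ∀ ε ∈ P, ∃ g ∈ P, g⁻¹ * ε ∈ P) (l : ℕ) {p : A} (hp : p ∈ P) :
    ∃ g ∈ P, (g ^ l)⁻¹ * p ∈ P := by
  obtain ⟨g, hg, hgp⟩ := exists_pow_two_pow_lt_of_dense N hPN hmul htri hdense l hp
  have hl : l < 2 ^ l := l.lt_two_pow_self
  have hsplit : (g ^ l)⁻¹ * p = g ^ (2 ^ l - l) * ((g ^ 2 ^ l)⁻¹ * p) := by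
    rw [← pow_sub_mul_pow g hl.le]
    group
  exact ⟨g, hg, hsplit ▸ hmul _ (pow_mem_of_mul_mem hmul hg (Nat.sub_pos_of_lt hl)) _ hgp⟩

end PositiveCone

/-- let `A` be a torsion-free abelian group, `N ≤ A` a subgroup, and `P_N` the
positive cone of a dense (no least positive element) ordering of `N`.  Then
`Q = {g : ∃ l > 0, gˡ ∈ P_N}` is the positive cone of a dense ordering of the isolator
`I(N) = {g : ∃ l > 0, gˡ ∈ N}`. -/
theorem statement8 {A : Type*} [CommGroup A]
    (htf : ∀ g : A, g ≠ 1 → ∀ n : ℕ, 0 < n → g ^ n ≠ 1)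
    (N : Subgroup A) (PN : Set A) (hPN : PN ⊆ (N : Set A))
    (hmul : ∀ a ∈ PN, ∀ b ∈ PN, a * b ∈ PN)
    (htri : ∀ g : A, g ∈ N → g ∈ PN ∨ g⁻¹ ∈ PN ∨ g = 1)
    (hasym : ∀ g : A, g ∈ PN → g⁻¹ ∉ PN)
    (hdense : ∀ ε ∈ PN, ∃ g ∈ PN, g⁻¹ * ε ∈ PN) :
    let I : Set A := {g : A | ∃ l : ℕ, 0 < l ∧ g ^ l ∈ N}
    let Q : Set A := {g : A | ∃ l : ℕ, 0 < l ∧ g ^ l ∈ PN}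
    Q ⊆ I ∧
      (∀ a ∈ Q, ∀ b ∈ Q, a * b ∈ Q) ∧
      (∀ g : A, g ∈ I → g ∈ Q ∨ g⁻¹ ∈ Q ∨ g = 1) ∧
      (∀ g : A, g ∈ Q → g⁻¹ ∉ Q) ∧
      (1 : A) ∉ Q ∧
      (∀ ε ∈ Q, ∃ g ∈ Q, g⁻¹ * ε ∈ Q) := by
  intro I Q
  have hQ_asymm : ∀ g ∈ Q, g⁻¹ ∉ Q := by
    rintro g ⟨l, hl, hgl⟩ ⟨m, hm, hgm⟩
    refine hasym (g ^ (l * m)) ?_ ?_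
    · exact pow_mul g l m ▸ pow_mem_of_mul_mem hmul hgl hm
    · simpa [← pow_mul, mul_comm l m] using pow_mem_of_mul_mem hmul hgm hl
  refine ⟨fun g ⟨l, hl, hgl⟩ => ⟨l, hl, hPN hgl⟩, ?_, ?_, hQ_asymm,
    fun h => hQ_asymm 1 h (by simpa), ?_⟩
  · rintro a ⟨l, hl, hal⟩ b ⟨m, hm, hbm⟩
    refine ⟨l * m, Nat.mul_pos hl hm, ?_⟩
    rw [mul_pow, pow_mul, mul_comm l m, pow_mul]
    exact hmul _ (pow_mem_of_mul_mem hmul hal hm) _ (pow_mem_of_mul_mem hmul hbm hl)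
  · rintro g ⟨l, hl, hgl⟩
    rcases htri _ hgl with h | h | h
    · exact .inl ⟨l, hl, h⟩
    · exact .inr (.inl ⟨l, hl, by rwa [inv_pow]⟩)
    · exact .inr (.inr (by_contra fun hg => htf g hg l hl h))
  · rintro ε ⟨l, hl, hεl⟩
    obtain ⟨g, hg, hgε⟩ := exists_pow_lt_of_dense N hPN hmul htri hdense l hεl
    exact ⟨g, ⟨1, one_pos, by simpa using hg⟩, l, hl, by rwa [mul_pow, inv_pow]⟩
end

section
/- Let k ≥ 2 and let n ∈ ℝᵏ be a nonzero vector such that the hyperplane H = {v : n·v = 0} contains no nonzero lattice point of ℤᵏ. Then the set P = {v ∈ ℤᵏ : n·v > 0} is the positive cone of a dense ordering of ℤᵏ: it is closed under addition, for every nonzero v ∈ ℤᵏ exactly one of v ∈ P or −v ∈ P holds, and P has no least element with respect to the induced order (u < w iff w − u ∈ P). -/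
/-- if `n ∈ ℝᵏ` (`k ≥ 2`) is nonzero and the hyperplane `{v : n·v = 0}`
contains no nonzero lattice point, then `P = {v ∈ ℤᵏ : n·v > 0}` is the positive cone of a
dense ordering of `ℤᵏ`: it is closed under addition, for every nonzero `v` exactly one of
`v ∈ P`, `-v ∈ P` holds, and `P` has no least element in the induced order
(`u < w ↔ w - u ∈ P`). -/
theorem statement10 {k : ℕ} (hk : 2 ≤ k) (n : Fin k → ℝ) (hn : n ≠ 0)
    (hlat : ∀ v : Fin k → ℤ, v ≠ 0 → ∑ i : Fin k, n i * (v i : ℝ) ≠ 0) :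
    let P : Set (Fin k → ℤ) := {v : Fin k → ℤ | 0 < ∑ i : Fin k, n i * (v i : ℝ)}
    (∀ u ∈ P, ∀ w ∈ P, u + w ∈ P) ∧
      (∀ v : Fin k → ℤ, v ≠ 0 → (v ∈ P ∧ -v ∉ P) ∨ (-v ∈ P ∧ v ∉ P)) ∧
      (∀ ε ∈ P, ∃ v ∈ P, ε - v ∈ P) := by
  intro P
  have hadd : ∀ u w : Fin k → ℤ, (∑ i : Fin k, n i * ((u + w) i : ℝ)) =
      (∑ i : Fin k, n i * (u i : ℝ)) + ∑ i : Fin k, n i * (w i : ℝ) := by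
    intro u w
    rw [← Finset.sum_add_distrib]
    refine Finset.sum_congr rfl fun i _ => ?_
    simp [mul_add]
  set F : (Fin k → ℤ) →+ ℝ := AddMonoidHom.mk' (fun v => ∑ i : Fin k, n i * (v i : ℝ)) hadd
    with hF
  have hP : ∀ v : Fin k → ℤ, v ∈ P ↔ 0 < F v := fun v => Iff.rfl
  refine ⟨fun u hu w hw => ?_, fun v hv => ?_, fun ε hε => ?_⟩
  · rw [hP] at *
    rw [map_add]
    exact add_pos hu hw
  · have h1 : F v ≠ 0 := hlat v hv
    have h2 : F (-v) = - F v := map_neg F v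
    rcases h1.lt_or_gt with h | h
    · right
      constructor
      · rw [hP, h2]; linarith
      · rw [hP]; intro hc; linarith
    · left
      constructor
      · exact h
      · rw [hP, h2]; intro hc; linarith
  · rw [hP] at hε
    rcases AddSubgroup.dense_or_cyclic F.range with hD | ⟨a, ha⟩
    · obtain ⟨x, hxS, hx⟩ := hD.exists_mem_open isOpen_Ioo
        (⟨F ε / 2, by constructor <;> [linarith; linarith]⟩ : (Set.Ioo 0 (F ε)).Nonempty)
      obtain ⟨v, hv⟩ := hxS
      refine ⟨v, ?_, ?_⟩
      · rw [hP, hv]; exact hx.1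
      · rw [hP, map_sub, hv]; linarith [hx.2]
    · exfalso
      set i₀ : Fin k := ⟨0, by omega⟩
      set i₁ : Fin k := ⟨1, by omega⟩
      have hne : i₀ ≠ i₁ := by simp [i₀, i₁, Fin.ext_iff]
      set e₀ : Fin k → ℤ := Pi.single i₀ 1
      set e₁ : Fin k → ℤ := Pi.single i₁ 1
      have he₀ : F e₀ ∈ F.range := ⟨e₀, rfl⟩
      have he₁ : F e₁ ∈ F.range := ⟨e₁, rfl⟩
      rw [ha, AddSubgroup.mem_closure_singleton] at he₀ he₁
      obtain ⟨m, hm⟩ := he₀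
      obtain ⟨l, hl⟩ := he₁
      set w : Fin k → ℤ := l • e₀ - m • e₁
      have hFw : F w = 0 := by
        rw [map_sub, map_zsmul, map_zsmul, ← hm, ← hl, smul_smul, smul_smul, mul_comm, sub_self]
      by_cases hw : w = 0
      · -- then l = 0 and m = 0, so F e₀ = 0, contradicting hlat
        have hl0 : l = 0 := by
          have := congrFun hw i₀
          simpa [w, e₀, e₁, Pi.single_apply, hne, hne.symm] using this
        have hm0 : m = 0 := by
          have := congrFun hw i₁
          simpa [w, e₀, e₁, Pi.single_apply, hne, hne.symm] using this
        have : F e₀ = 0 := by rw [← hm, hm0, zero_smul]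
        have he0ne : e₀ ≠ 0 := by
          intro h
          have := congrFun h i₀
          simp [e₀] at this
        exact hlat e₀ he0ne this
      · exact hlat w hw hFw
end

section
/- Let G be a countable group. Then the set Z of positive cones of dense left orderings of G is a Gδ subset of the space LO(G) of all positive cones, with its topology as a subspace of 2^G (product topology). Specifically, for each ε ≠ 1, the set V_ε of positive cones of discrete orderings with least positive element ε is closed, and Z = ⋂_{ε ≠ 1} (LO(G) \ V_ε). -/
/-- The product (Cantor) topology on `2^α = Set α`, induced from `α → Bool` with
`Bool` discrete, via characteristic functions. -/
noncomputable instance setProductTopology {α : Type*} : TopologicalSpace (Set α) :=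
  TopologicalSpace.induced
    (fun (P : Set α) (a : α) => @decide (a ∈ P) (Classical.propDecidable _)) inferInstance

/-- The space of left orderings of `G`: positive cones with the subspace topology
from `2^G`. -/
def LO (G : Type*) [Group G] : Type _ := {P : Set G // IsPosCone P}

noncomputable instance {G : Type*} [Group G] : TopologicalSpace (LO G) :=
  instTopologicalSpaceSubtype

lemma isClopen_memSet {α : Type*} (a : α) : IsClopen {P : Set α | a ∈ P} := by
  have h : {P : Set α | a ∈ P} =
      (fun (P : Set α) (x : α) => @decide (x ∈ P) (Classical.propDecidable _)) ⁻¹'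
        {f : α → Bool | f a = true} := by
    ext P
    simp
  rw [h]
  have hc : Continuous
      (fun (P : Set α) (x : α) => @decide (x ∈ P) (Classical.propDecidable _)) :=
    continuous_induced_dom
  have h2 : IsClopen {f : α → Bool | f a = true} := by
    have : {f : α → Bool | f a = true} = (fun f : α → Bool => f a) ⁻¹' {true} := rfl
    rw [this]
    exact (isClopen_discrete {true}).preimage (continuous_apply a)
  exact h2.preimage hc

lemma isClopen_memLO {G : Type*} [Group G] (a : G) : IsClopen {P : LO G | a ∈ P.1} :=
  (isClopen_memSet a).preimage continuous_subtype_val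

/-- for a countable group `G`, the set `Z` of positive cones of dense left
orderings is a Gδ subset of `LO(G)`; for each `ε ≠ 1` the set `V_ε` of cones of discrete
orderings with least positive element `ε` is closed, and `Z = ⋂_{ε ≠ 1} (V_ε)ᶜ`. -/
theorem statement11 {G : Type*} [Group G] [Countable G] :
    let V : G → Set (LO G) :=
      fun ε => {P : LO G | ε ∈ P.1 ∧ ∀ g ∈ P.1, g = ε ∨ ε⁻¹ * g ∈ P.1}
    let Z : Set (LO G) := {P : LO G | ∀ ε ∈ P.1, ∃ g ∈ P.1, g⁻¹ * ε ∈ P.1}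
    (∀ ε : G, ε ≠ 1 → IsClosed (V ε)) ∧
      Z = ⋂ ε ∈ {ε : G | ε ≠ 1}, (V ε)ᶜ ∧
      IsGδ Z := by
  intro V Z
  have hVclosed : ∀ ε : G, IsClosed (V ε) := by
    intro ε
    have : V ε = {P : LO G | ε ∈ P.1} ∩
        ⋂ g : G, ({P : LO G | g = ε} ∪ {P : LO G | g ∈ P.1}ᶜ ∪
          {P : LO G | ε⁻¹ * g ∈ P.1}) := by
      ext P
      simp only [V, Set.mem_setOf_eq, Set.mem_inter_iff, Set.mem_iInter, Set.mem_union,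
        Set.mem_compl_iff]
      constructor
      · rintro ⟨h1, h2⟩
        refine ⟨h1, fun g => ?_⟩
        by_cases hg : g ∈ P.1
        · rcases h2 g hg with h | h
          · exact Or.inl (Or.inl h)
          · exact Or.inr h
        · exact Or.inl (Or.inr hg)
      · rintro ⟨h1, h2⟩
        refine ⟨h1, fun g hg => ?_⟩
        rcases h2 g with (h | h) | h
        · exact Or.inl h
        · exact absurd hg h
        · exact Or.inr h
    rw [this]
    refine ((isClopen_memLO ε).isClosed).inter (isClosed_iInter fun g => ?_)
    refine IsClosed.union (IsClosed.union ?_ ?_) ?_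
    · by_cases hg : g = ε
      · simp [hg]
      · convert isClosed_empty
        simp [hg]
    · exact (isClopen_memLO g).compl.isClosed
    · exact (isClopen_memLO (ε⁻¹ * g)).isClosed
  have hZeq : Z = ⋂ ε ∈ {ε : G | ε ≠ 1}, (V ε)ᶜ := by
    ext P
    obtain ⟨hmul, htri, hinv, hone⟩ := P.2
    simp only [Z, V, Set.mem_setOf_eq, Set.mem_iInter, Set.mem_compl_iff]
    constructor
    · intro hd ε hε hP
      obtain ⟨hεP, hmin⟩ := hP
      obtain ⟨g, hg, hg'⟩ := hd ε hεP
      rcases hmin g hg with rfl | h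
      · simp at hg'
        exact hone hg'
      · exact hinv _ h (by simpa using hg')
    · intro h ε hε
      have hε1 : ε ≠ 1 := fun h1 => hone (h1 ▸ hε)
      have := h ε hε1
      push_neg at this
      obtain ⟨g, hg, hgne, hgP⟩ := this hε
      refine ⟨g, hg, ?_⟩
      rcases htri (ε⁻¹ * g) with h1 | h1 | h1
      · exact absurd h1 hgP
      · simpa using h1
      · exfalso
        apply hgne
        have : ε * (ε⁻¹ * g) = ε * 1 := by rw [h1]
        simpa using this
  refine ⟨fun ε _ => hVclosed ε, hZeq, ?_⟩
  rw [hZeq]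
  exact IsGδ.biInter (Set.to_countable _) fun ε _ => ((hVclosed ε).isOpen_compl).isGδ
end

section
/- Let G be a group with left ordering < with positive cone P, C a convex subgroup, and suppose the positive cone P ∩ C is not an isolated point of LO(C). Then P is not an isolated point of LO(G). -/
namespace S14Aux

variable {G : Type*} [Group G]

/-- Replace the part of `P` inside `C` by (the image of) `Q`. -/
noncomputable def extCone (P : Set G) (C : Subgroup G) (Q : Set C) : Set G :=
  {g | @dite _ (g ∈ C) (Classical.propDecidable _) (fun h => (⟨g, h⟩ : C) ∈ Q) (fun _ => g ∈ P)}

theorem mem_extCone_of_mem {P : Set G} {C : Subgroup G} {Q : Set C} {g : G} (h : g ∈ C) :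
    g ∈ extCone P C Q ↔ (⟨g, h⟩ : C) ∈ Q := by
  unfold extCone
  simp only [Set.mem_setOf_eq, dif_pos h]

theorem mem_extCone_of_not_mem {P : Set G} {C : Subgroup G} {Q : Set C} {g : G} (h : g ∉ C) :
    g ∈ extCone P C Q ↔ g ∈ P := by
  unfold extCone
  simp only [Set.mem_setOf_eq, dif_neg h]

section conv

variable {P : Set G} (hP : IsPosCone P) {C : Subgroup G}
  (hconv : ∀ f g h : G, f ∈ C → h ∈ C → f⁻¹ * g ∈ P → g⁻¹ * h ∈ P → g ∈ P → g ∈ C)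

-- convexity with f = 1
include hP hconv

theorem left_mul_mem {g : G} (hg : g ∈ P) (hgc : g ∉ C) {c : G} (hc : c ∈ C) :
    c * g ∈ P := by
  rcases hP.2.1 (c * g) with h | h | h
  · exact h
  · exact absurd (hconv 1 g c⁻¹ C.one_mem (C.inv_mem hc) (by simpa using hg)
      (by simpa [mul_inv_rev, mul_assoc] using h) hg) hgc
  · refine absurd ?_ hgc
    have hg' : g = c⁻¹ := by
      have h2 : g = c⁻¹ * (c * g) := by group
      rw [h, mul_one] at h2; exact h2
    rw [hg']; exact C.inv_mem hc

theorem right_mul_mem {g : G} (hg : g ∈ P) (hgc : g ∉ C) {c : G} (hc : c ∈ C) :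
    g * c ∈ P := by
  rcases hP.2.1 (g * c) with h | h | h
  · exact h
  · exfalso
    have h1 : (g * c)⁻¹ ∉ C := by
      intro hx
      apply hgc
      have hx' : g * c ∈ C := by simpa using C.inv_mem hx
      have h2 : g = (g * c) * c⁻¹ := by group
      rw [h2]; exact C.mul_mem hx' (C.inv_mem hc)
    have h2 : c * (g * c)⁻¹ ∈ P := left_mul_mem hP hconv h h1 hc
    have : c * (g * c)⁻¹ = g⁻¹ := by group
    rw [this] at h2
    exact hP.2.2.1 g hg h2
  · refine absurd ?_ hgc
    have hg' : g = c⁻¹ := by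
      have h2 : g = (g * c) * c⁻¹ := by group
      rw [h, one_mul] at h2; exact h2
    rw [hg']; exact C.inv_mem hc

theorem mul_not_mem {a b : G} (ha : a ∈ P) (hb : b ∈ P) (hac : a ∉ C) : a * b ∉ C := by
  intro hx
  exact hac (hconv 1 a (a * b) C.one_mem hx (by simpa using ha)
    (by simpa [mul_assoc] using hb) ha)

theorem isPosCone_extCone {Q : Set C} (hQ : IsPosCone Q) : IsPosCone (extCone P C Q) := by
  refine ⟨?_, ?_, ?_, ?_⟩
  · intro a ha b hb
    by_cases hac : a ∈ C <;> by_cases hbc : b ∈ C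
    · rw [mem_extCone_of_mem hac] at ha
      rw [mem_extCone_of_mem hbc] at hb
      rw [mem_extCone_of_mem (C.mul_mem hac hbc)]
      exact hQ.1 _ ha _ hb
    · rw [mem_extCone_of_not_mem hbc] at hb
      have habc : a * b ∉ C := fun hx => hbc (by
        have : b = a⁻¹ * (a * b) := by group
        rw [this]; exact C.mul_mem (C.inv_mem hac) hx)
      rw [mem_extCone_of_not_mem habc]
      exact left_mul_mem hP hconv hb hbc hac
    · rw [mem_extCone_of_not_mem hac] at ha
      have habc : a * b ∉ C := fun hx => hac (by
        have : a = (a * b) * b⁻¹ := by group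
        rw [this]; exact C.mul_mem hx (C.inv_mem hbc))
      rw [mem_extCone_of_not_mem habc]
      exact right_mul_mem hP hconv ha hac hbc
    · rw [mem_extCone_of_not_mem hac] at ha
      rw [mem_extCone_of_not_mem hbc] at hb
      rw [mem_extCone_of_not_mem (mul_not_mem hP hconv ha hb hac)]
      exact hP.1 _ ha _ hb
  · intro g
    by_cases hg : g ∈ C
    · rcases hQ.2.1 ⟨g, hg⟩ with h | h | h
      · exact Or.inl ((mem_extCone_of_mem hg).2 h)
      · exact Or.inr (Or.inl ((mem_extCone_of_mem (C.inv_mem hg)).2 h))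
      · exact Or.inr (Or.inr (by simpa using congrArg (Subtype.val) h))
    · rcases hP.2.1 g with h | h | h
      · exact Or.inl ((mem_extCone_of_not_mem hg).2 h)
      · exact Or.inr (Or.inl ((mem_extCone_of_not_mem (fun hx => hg (by
          simpa using C.inv_mem hx))).2 h))
      · exact absurd (h ▸ C.one_mem) hg
  · intro g hg hg'
    by_cases hgc : g ∈ C
    · rw [mem_extCone_of_mem hgc] at hg
      rw [mem_extCone_of_mem (C.inv_mem hgc)] at hg'
      exact hQ.2.2.1 _ hg hg'
    · rw [mem_extCone_of_not_mem hgc] at hg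
      rw [mem_extCone_of_not_mem (fun hx => hgc (by simpa using C.inv_mem hx))] at hg'
      exact hP.2.2.1 _ hg hg'
  · rw [mem_extCone_of_mem C.one_mem]
    exact fun h => hQ.2.2.2 h

end conv

end S14Aux

open S14Aux

/-- if `C` is a convex subgroup of a left-ordered group `G` with positive
cone `P`, and the restricted cone `P ∩ C` is not an isolated point of `LO(C)`, then `P`
is not an isolated point of `LO(G)`. -/
theorem statement14 {G : Type*} [Group G] (P : Set G) (hP : IsPosCone P)
    (C : Subgroup G)
    (hconv : ∀ f g h : G, f ∈ C → h ∈ C → f⁻¹ * g ∈ P → g⁻¹ * h ∈ P → g ∈ C)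
    (hni : ¬ IsOpen {Q : LO C | Q.1 = {c : C | (c : G) ∈ P}}) :
    ¬ IsOpen {Q : LO G | Q.1 = P} := by
  intro hop
  apply hni
  have hconv' : ∀ f g h : G, f ∈ C → h ∈ C → f⁻¹ * g ∈ P → g⁻¹ * h ∈ P → g ∈ P → g ∈ C :=
    fun f g h hf hh h1 h2 _ => hconv f g h hf hh h1 h2
  set phi : LO C → LO G := fun Q => ⟨extCone P C Q.1, isPosCone_extCone hP hconv' Q.2⟩ with hphi
  have hcont : Continuous phi := by
    apply Continuous.subtype_mk
    apply continuous_induced_rng.2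
    apply continuous_pi
    intro g
    show Continuous (fun Q : LO C => @decide (g ∈ extCone P C Q.1) (Classical.propDecidable _))
    by_cases hg : g ∈ C
    · have heq : (fun Q : LO C => @decide (g ∈ extCone P C Q.1) (Classical.propDecidable _)) =
        ((fun f : C → Bool => f ⟨g, hg⟩) ∘
          ((fun (R : Set C) (a : C) => @decide (a ∈ R) (Classical.propDecidable _)) ∘
          Subtype.val)) := by
        funext Q
        exact decide_eq_decide.2 (mem_extCone_of_mem hg)
      rw [heq]
      exact (continuous_apply _).comp (continuous_induced_dom.comp continuous_subtype_val)
    · have heq : (fun Q : LO C => @decide (g ∈ extCone P C Q.1) (Classical.propDecidable _)) =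
        fun _ => @decide (g ∈ P) (Classical.propDecidable _) := by
        funext Q
        exact decide_eq_decide.2 (mem_extCone_of_not_mem hg)
      rw [heq]
      exact continuous_const
  have hpre : phi ⁻¹' {Q : LO G | Q.1 = P} = {Q : LO C | Q.1 = {c : C | (c : G) ∈ P}} := by
    ext Q
    simp only [Set.mem_preimage, Set.mem_setOf_eq]
    constructor
    · intro h
      ext c
      constructor
      · intro hc
        have : (c : G) ∈ extCone P C Q.1 := (mem_extCone_of_mem c.2).2 (by simpa using hc)
        rw [show extCone P C Q.1 = P from h] at this
        exact this
      · intro hc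
        have : (c : G) ∈ extCone P C Q.1 := by rw [show extCone P C Q.1 = P from h]; exact hc
        simpa using (mem_extCone_of_mem c.2).1 this
    · intro h
      show extCone P C Q.1 = P
      ext g
      by_cases hg : g ∈ C
      · rw [mem_extCone_of_mem hg, h]
        rfl
      · exact mem_extCone_of_not_mem hg
  rw [← hpre]
  exact hop.preimage hcont
end

section
/- Let G be a group with left ordering having positive cone P, and C a normal convex subgroup. Let P' be the induced positive cone on G/C (gC ∈ P' iff g ∈ P and g ∉ C). If P' is not isolated in LO(G/C), then P is not isolated in LO(G). -/
namespace S15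

variable {G : Type*} [Group G]

/-- Pullback of a cone on `G ⧸ C` to `G`. -/
def pull (P : Set G) (C : Subgroup G) [C.Normal] (Q' : Set (G ⧸ C)) : Set G :=
  {g : G | ((g : G ⧸ C) ∈ Q') ∨ (g ∈ P ∧ g ∈ C)}

lemma pull_cone (P : Set G) (hP : IsPosCone P) (C : Subgroup G) [C.Normal]
    {Q' : Set (G ⧸ C)} (hQ' : IsPosCone Q') : IsPosCone (pull P C Q') := by
  obtain ⟨Pm, Pt, Pa, P1⟩ := hP
  obtain ⟨Qm, Qt, Qa, Q1⟩ := hQ'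
  refine ⟨?_, ?_, ?_, ?_⟩
  · rintro a (ha | ⟨haP, haC⟩) b (hb | ⟨hbP, hbC⟩)
    · exact Or.inl (Qm _ ha _ hb)
    · left
      have hb1 : ((b : G) : G ⧸ C) = 1 := (QuotientGroup.eq_one_iff b).mpr hbC
      show ((a * b : G) : G ⧸ C) ∈ Q'
      rw [show ((a * b : G) : G ⧸ C) = (a : G ⧸ C) * (b : G ⧸ C) from rfl, hb1, mul_one]
      exact ha
    · left
      have ha1 : ((a : G) : G ⧸ C) = 1 := (QuotientGroup.eq_one_iff a).mpr haC
      show ((a * b : G) : G ⧸ C) ∈ Q'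
      rw [show ((a * b : G) : G ⧸ C) = (a : G ⧸ C) * (b : G ⧸ C) from rfl, ha1, one_mul]
      exact hb
    · exact Or.inr ⟨Pm _ haP _ hbP, C.mul_mem haC hbC⟩
  · intro g
    by_cases hgC : g ∈ C
    · rcases Pt g with h | h | h
      · exact Or.inl (Or.inr ⟨h, hgC⟩)
      · exact Or.inr (Or.inl (Or.inr ⟨h, C.inv_mem hgC⟩))
      · exact Or.inr (Or.inr h)
    · rcases Qt ((g : G ⧸ C)) with h | h | h
      · exact Or.inl (Or.inl h)
      · refine Or.inr (Or.inl (Or.inl ?_))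
        rwa [show ((g⁻¹ : G) : G ⧸ C) = ((g : G ⧸ C))⁻¹ from rfl]
      · exact absurd ((QuotientGroup.eq_one_iff g).mp h) hgC
  · rintro g (hg | ⟨hgP, hgC⟩) (h | ⟨hP', hC'⟩)
    · exact Qa _ hg (by rwa [show ((g⁻¹ : G) : G ⧸ C) = ((g : G ⧸ C))⁻¹ from rfl] at h)
    · have : g ∈ C := by simpa using C.inv_mem hC'
      exact Q1 (by rw [← (QuotientGroup.eq_one_iff g).mpr this]; exact hg)
    · have : g⁻¹ ∈ C := C.inv_mem hgC
      exact Q1 (by rw [← (QuotientGroup.eq_one_iff g⁻¹).mpr this]; exact h)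
    · exact Pa _ hgP hP'
  · rintro (h | ⟨h, _⟩)
    · exact Q1 (by simpa using h)
    · exact P1 h

end S15

namespace S15

variable {G : Type*} [Group G]

lemma pull_P' (P : Set G) (hP : IsPosCone P) (C : Subgroup G) [C.Normal]
    (hconv : ∀ f g h : G, f ∈ C → h ∈ C → f⁻¹ * g ∈ P → g⁻¹ * h ∈ P → g ∈ C) :
    pull P C {x : G ⧸ C | ∃ g : G, g ∈ P ∧ g ∉ C ∧ x = (g : G ⧸ C)} = P := by
  obtain ⟨Pm, Pt, Pa, P1⟩ := hP
  ext g
  constructor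
  · rintro (⟨h, hhP, hhC, hgh⟩ | ⟨hgP, _⟩)
    · -- π g = π h with h ∈ P \ C; show g ∈ P using convexity
      by_contra hgP
      have hc : g⁻¹ * h ∈ C := QuotientGroup.eq.mp hgh
      have hg1 : g ≠ 1 := by
        rintro rfl
        exact hhC ((QuotientGroup.eq_one_iff h).mp hgh.symm)
      have hgi : g⁻¹ ∈ P := by
        rcases Pt g with h' | h' | h'
        · exact absurd h' hgP
        · exact h'
        · exact absurd h' hg1
      have : g⁻¹ ∈ C := by
        refine hconv 1 g⁻¹ (g⁻¹ * h) C.one_mem hc ?_ ?_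
        · simpa using hgi
        · simpa using hhP
      have hgC : g ∈ C := by simpa using C.inv_mem this
      exact hhC (by simpa using C.mul_mem hgC hc)
    · exact hgP
  · intro hgP
    by_cases hgC : g ∈ C
    · exact Or.inr ⟨hgP, hgC⟩
    · exact Or.inl ⟨g, hgP, hgC, rfl⟩

end S15

namespace S15

variable {G : Type*} [Group G]

noncomputable def phi (P : Set G) (hP : IsPosCone P) (C : Subgroup G) [C.Normal] :
    LO (G ⧸ C) → LO G :=
  fun Q' => ⟨pull P C Q'.1, pull_cone P hP C Q'.2⟩

lemma phi_cont (P : Set G) (hP : IsPosCone P) (C : Subgroup G) [C.Normal] :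
    Continuous (phi P hP C) := by
  apply Continuous.subtype_mk
  rw [continuous_induced_rng]
  apply continuous_pi
  intro g
  show Continuous fun Q' : LO (G ⧸ C) =>
    @decide (g ∈ pull P C Q'.1) (Classical.propDecidable _)
  by_cases hg : g ∈ P ∧ g ∈ C
  · have heq : (fun Q' : LO (G ⧸ C) =>
        @decide (g ∈ pull P C Q'.1) (Classical.propDecidable _)) = fun _ => true := by
      funext Q'
      exact @decide_eq_true _ (Classical.propDecidable _) (Or.inr hg)
    rw [heq]
    exact continuous_const
  · have heq : (fun Q' : LO (G ⧸ C) =>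
        @decide (g ∈ pull P C Q'.1) (Classical.propDecidable _)) =
        (fun f : (G ⧸ C) → Bool => f (g : G ⧸ C)) ∘
          (fun S : Set (G ⧸ C) => fun a => @decide (a ∈ S) (Classical.propDecidable _)) ∘
          Subtype.val := by
      funext Q'
      exact decide_eq_decide.mpr (by simp [pull, Set.mem_setOf_eq, hg])
    rw [heq]
    exact (continuous_apply _).comp (continuous_induced_dom.comp continuous_subtype_val)

end S15

/-- if `C` is a normal convex subgroup of a left-ordered group `G` with
positive cone `P`, and the induced positive cone `P' = {gC : g ∈ P \ C}` on `G/C` is not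
isolated in `LO(G/C)`, then `P` is not isolated in `LO(G)`. -/
theorem statement15 {G : Type*} [Group G] (P : Set G) (hP : IsPosCone P)
    (C : Subgroup G) [C.Normal]
    (hconv : ∀ f g h : G, f ∈ C → h ∈ C → f⁻¹ * g ∈ P → g⁻¹ * h ∈ P → g ∈ C)
    (hni : ¬ IsOpen {Q : LO (G ⧸ C) |
      Q.1 = {x : G ⧸ C | ∃ g : G, g ∈ P ∧ g ∉ C ∧ x = (g : G ⧸ C)}}) :
    ¬ IsOpen {Q : LO G | Q.1 = P} := by
  intro hopen
  apply hni
  have key : {Q : LO (G ⧸ C) |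
      Q.1 = {x : G ⧸ C | ∃ g : G, g ∈ P ∧ g ∉ C ∧ x = (g : G ⧸ C)}} =
      S15.phi P hP C ⁻¹' {Q : LO G | Q.1 = P} := by
    ext Q'
    simp only [Set.mem_setOf_eq, Set.mem_preimage]
    constructor
    · intro h
      show S15.pull P C Q'.1 = P
      rw [h]
      exact S15.pull_P' P hP C hconv
    · intro h
      replace h : S15.pull P C Q'.1 = P := h
      ext x
      constructor
      · intro hx
        obtain ⟨g, hg⟩ := QuotientGroup.mk_surjective x
        have hgQ : g ∈ S15.pull P C Q'.1 := Or.inl (by rw [hg]; exact hx)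
        have hgP : g ∈ P := h ▸ hgQ
        have hgC : g ∉ C := by
          intro hc
          refine Q'.2.2.2.2 ?_
          rw [← (QuotientGroup.eq_one_iff g).mpr hc, hg]
          exact hx
        exact ⟨g, hgP, hgC, hg.symm⟩
      · rintro ⟨g, hgP, hgC, rfl⟩
        have hgQ : g ∈ S15.pull P C Q'.1 := by rw [h]; exact hgP
        rcases hgQ with h1 | ⟨_, hC⟩
        · exact h1
        · exact absurd hC hgC
  rw [key]
  exact (S15.phi_cont P hP C).isOpen_preimage _ hopen
end

section
/- Suppose G is a group with left ordering < with positive cone P such that for some finite set g₁,…,g_m ∈ P, the open set ⋂ U_{g_i} contains P but contains no conjugate hPh⁻¹ distinct from P. Then there exists an index i such that every g ∈ G with 1 < g ≤ g_iᵏ for some k ∈ ℕ satisfies gPg⁻¹ = P. -/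
/-- if the basic open set `⋂ U_{g i}` contains the positive cone `P` but no
conjugate `hPh⁻¹` distinct from `P`, then for some index `i`, every `x` with
`1 < x ≤ (g i)ᵏ` for some `k` fixes `P` under conjugation. -/
theorem statement16 {G : Type*} [Group G] (P : Set G) (hP : IsPosCone P)
    (m : ℕ) (hm : 0 < m) (g : Fin m → G) (hgP : ∀ i, g i ∈ P)
    (hnoconj : ∀ h : G, (∀ i, g i ∈ (fun p => h * p * h⁻¹) '' P) →
      (fun p => h * p * h⁻¹) '' P = P) :
    ∃ i : Fin m, ∀ x : G, x ∈ P →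
      (∃ k : ℕ, x⁻¹ * (g i) ^ k ∈ P ∨ x = (g i) ^ k) →
      (fun p => x * p * x⁻¹) '' P = P := by

  obtain ⟨Pmul, Ptri, Pasym, Pone⟩ := hP
  classical
  let le : G → G → Prop := fun a b => a⁻¹ * b ∈ P ∨ a = b
  have letrans : ∀ a b c : G, le a b → le b c → le a c := by
    rintro a b c (hab | rfl) (hbc | rfl)
    · left
      have := Pmul _ hab _ hbc
      simpa [mul_assoc] using this
    · left; exact hab
    · left; exact hbc
    · right; rfl
  let R : Fin m → Fin m → Prop := fun j i => ∃ k : ℕ, ∀ n : ℕ, le (g j ^ n) (g i ^ k)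
  have Rirrefl : ∀ i, ¬ R i i := by
    rintro i ⟨k, hk⟩
    rcases hk (k + 1) with h | h
    · have h' : (g i)⁻¹ ∈ P := by
        have e : (g i ^ (k + 1))⁻¹ * g i ^ k = (g i)⁻¹ := by
          rw [pow_succ]; group
        rw [e] at h; exact h
      exact Pasym _ (hgP i) h'
    · have h2 : g i ^ k * g i = g i ^ k * 1 := by
        rw [mul_one, ← pow_succ]; exact h
      exact Pone (mul_left_cancel h2 ▸ hgP i)
  have Rtrans : ∀ a b c, R a b → R b c → R a c := by
    rintro a b c ⟨k, hk⟩ ⟨k', hk'⟩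
    exact ⟨k', fun n => letrans _ _ _ (hk n) (hk' k)⟩
  haveI : IsTrans (Fin m) R := ⟨Rtrans⟩
  haveI : IsIrrefl (Fin m) R := ⟨Rirrefl⟩
  obtain ⟨i, -, hmin⟩ :=
    (Finite.wellFounded_of_trans_of_irrefl R).has_min Set.univ ⟨⟨0, hm⟩, trivial⟩
  refine ⟨i, fun x hx hk => ?_⟩
  obtain ⟨k, hk⟩ := hk
  apply hnoconj x
  intro j
  by_contra hj
  have hyP : x⁻¹ * g j * x ∉ P := by
    intro hy
    exact hj ⟨x⁻¹ * g j * x, hy, by group⟩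
  have hne : x⁻¹ * g j * x ≠ 1 := by
    intro h
    have hg1 : g j = 1 := by
      have := congrArg (fun t => x * t * x⁻¹) h
      simpa [mul_assoc] using this
    exact Pone (hg1 ▸ hgP j)
  have hneg : x⁻¹ * (g j)⁻¹ * x ∈ P := by
    rcases Ptri (x⁻¹ * g j * x) with h | h | h
    · exact absurd h hyP
    · have e : (x⁻¹ * g j * x)⁻¹ = x⁻¹ * (g j)⁻¹ * x := by group
      rw [e] at h; exact h
    · exact absurd h hne
  refine hmin j trivial ⟨k, fun n => ?_⟩
  have key : ∀ n : ℕ, le (g j ^ n * x) x := by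
    intro n
    induction n with
    | zero => right; simp
    | succ n ih =>
      refine letrans _ _ _ ?_ ih
      left
      have e : (g j ^ (n + 1) * x)⁻¹ * (g j ^ n * x) = x⁻¹ * (g j)⁻¹ * x := by
        rw [pow_succ]; group
      rw [e]; exact hneg
  have h1 : le (g j ^ n) (g j ^ n * x) := by
    left
    have e : (g j ^ n)⁻¹ * (g j ^ n * x) = x := by group
    rw [e]; exact hx
  have h2 : le x (g i ^ k) := hk
  exact letrans _ _ _ h1 (letrans _ _ _ (key n) h2)
end
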